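/- Let G be a finite connected simple triangle-free graph with n vertices and m edges, and let h ≥ 2 be an integer. If m ≤ 2(n + 2h − 2) and 2(1 + √(2h)) ≤ n ≤ 16(h − 1), then the bondage number satisfies b(G) ≤ 7 + 8(h − 1)/(1 + √(2h)). -/

import Mathlib

/-- A finset `D` of vertices is a dominating set of `G` if every vertex not in `D`
is adjacent to some vertex in `D`. -/
def SimpleGraph.IsDominatingSet {V : Type*} (G : SimpleGraph V) (D : Finset V) : Prop :=
  ∀ v : V, v ∉ D → ∃ u ∈ D, G.Adj u v

/-- The domination number of `G`: the minimum cardinality of a dominating set. -/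
noncomputable def SimpleGraph.dominationNumber {V : Type*} [Fintype V]
    (G : SimpleGraph V) : ℕ :=
  sInf {k | ∃ D : Finset V, G.IsDominatingSet D ∧ D.card = k}

/-- The bondage number of `G`: the minimum cardinality of a set `B` of edges of `G`
whose removal increases the domination number. -/
noncomputable def SimpleGraph.bondageNumber {V : Type*} [Fintype V]
    (G : SimpleGraph V) : ℕ :=
  sInf {k | ∃ B : Finset (Sym2 V), ↑B ⊆ G.edgeSet ∧ B.card = k ∧
    G.dominationNumber < (G.deleteEdges ↑B).dominationNumber}

/-!
If `u ≠ v` have intersecting closed neighbourhoods, delete all edges at `u` and `v`, except the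
edge `uw` to a common neighbour `w` when `u` and `v` are not adjacent. In a dominating set of the
new graph, `u` and `v` (resp. `v` alone, if `w` is already there) can be exchanged for `w` to get a
smaller dominating set of `G`; so the domination number rises and `b(G) ≤ deg u + deg v - 1`.

With no isolated vertices there is such a pair with `deg u + deg v ≤ 2d`, `d = 2m/n` the average
degree. Otherwise the closed neighbourhoods of the vertices of degree `≤ d` are pairwise disjoint,
each has positive total excess `∑ (deg y - d)`, and every vertex outside them has positive excess,
contradicting `∑ (deg y - d) = 0`. Finally `2d ≤ 8 + 16(h-1)/n ≤ 8 + 8(h-1)/(1+√(2h))`.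
-/

open Finset

namespace SimpleGraph

variable {V : Type*}

section Domination

variable [Fintype V] (G : SimpleGraph V)

theorem isDominatingSet_univ : G.IsDominatingSet univ :=
  fun v hv => absurd (mem_univ v) hv

theorem dominationNumber_le_card {D : Finset V} (hD : G.IsDominatingSet D) :
    G.dominationNumber ≤ #D :=
  Nat.sInf_le ⟨D, hD, rfl⟩

theorem exists_isDominatingSet_card_eq_dominationNumber :
    ∃ D : Finset V, G.IsDominatingSet D ∧ #D = G.dominationNumber :=
  Nat.sInf_mem (s := {k | ∃ D : Finset V, G.IsDominatingSet D ∧ #D = k})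
    ⟨_, univ, G.isDominatingSet_univ, rfl⟩

theorem dominationNumber_lt_of_forall_exists_card_lt {H : SimpleGraph V}
    (h : ∀ D, H.IsDominatingSet D → ∃ D', G.IsDominatingSet D' ∧ #D' < #D) :
    G.dominationNumber < H.dominationNumber := by
  obtain ⟨D, hD, hDcard⟩ := H.exists_isDominatingSet_card_eq_dominationNumber
  obtain ⟨D', hD', hlt⟩ := h D hD
  exact hDcard ▸ (G.dominationNumber_le_card hD').trans_lt hlt

theorem bondageNumber_le_card {B : Finset (Sym2 V)} (hB : ↑B ⊆ G.edgeSet)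
    (hlt : G.dominationNumber < (G.deleteEdges ↑B).dominationNumber) :
    G.bondageNumber ≤ #B :=
  Nat.sInf_le ⟨B, hB, rfl, hlt⟩

end Domination

namespace IsDominatingSet

variable {G H : SimpleGraph V} {D : Finset V}

theorem mem_of_forall_not_adj (hD : H.IsDominatingSet D) {v : V} (hv : ∀ x, ¬H.Adj x v) :
    v ∈ D := by
  by_contra hvD
  obtain ⟨x, -, hx⟩ := hD v hvD
  exact hv x hx

theorem insert_sdiff [DecidableEq V] (hD : H.IsDominatingSet D) (hHG : H ≤ G) {S : Finset V}
    {w : V} (hwS : ∀ s ∈ S, G.Adj w s) (hSw : ∀ s ∈ S, ∀ y, H.Adj s y → y = w) :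
    G.IsDominatingSet (insert w (D \ S)) := by
  intro y hy
  rw [mem_insert, mem_sdiff, not_or, not_and_not_right] at hy
  obtain ⟨hyw, hyDS⟩ := hy
  by_cases hyS : y ∈ S
  · exact ⟨w, mem_insert_self _ _, hwS y hyS⟩
  obtain ⟨x, hxD, hxy⟩ := hD y fun hyD => hyS (hyDS hyD)
  have hxS : x ∉ S := fun hxS => hyw (hSw x hxS y hxy)
  exact ⟨x, mem_insert_of_mem (mem_sdiff.2 ⟨hxD, hxS⟩), hHG hxy⟩

theorem exists_card_lt_of_adj [DecidableEq V] (hD : H.IsDominatingSet D) (hHG : H ≤ G)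
    {u v : V} (huv : G.Adj u v) (hu : ∀ y, ¬H.Adj u y) (hv : ∀ y, ¬H.Adj v y) :
    ∃ D', G.IsDominatingSet D' ∧ #D' < #D := by
  have huD : u ∈ D := hD.mem_of_forall_not_adj fun x hx => hu x hx.symm
  have hvD : v ∈ D := hD.mem_of_forall_not_adj fun x hx => hv x hx.symm
  have hdom := hD.insert_sdiff hHG (S := {u}) (w := v) (by simpa using huv.symm)
    fun s hs y hy => absurd (mem_singleton.1 hs ▸ hy) (hu y)
  rw [sdiff_singleton_eq_erase, insert_eq_of_mem (mem_erase.2 ⟨huv.ne', hvD⟩)] at hdom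
  exact ⟨_, hdom, card_erase_lt_of_mem huD⟩

theorem exists_card_lt_of_adj_of_adj [DecidableEq V] (hD : H.IsDominatingSet D) (hHG : H ≤ G)
    {u v w : V} (huv : u ≠ v) (hwu : G.Adj w u) (hwv : G.Adj w v) (hu : ∀ y, H.Adj u y → y = w)
    (hv : ∀ y, ¬H.Adj v y) :
    ∃ D', G.IsDominatingSet D' ∧ #D' < #D := by
  have hvD : v ∈ D := hD.mem_of_forall_not_adj fun x hx => hv x hx.symm
  by_cases huD : u ∈ D
  · refine ⟨_, hD.insert_sdiff hHG (S := {u, v}) (w := w) (by simp [hwu, hwv])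
      (fun s hs y hy => ?_), ?_⟩
    · rcases mem_insert.1 hs with rfl | hs
      exacts [hu y hy, absurd (mem_singleton.1 hs ▸ hy) (hv y)]
    have hsub : {u, v} ⊆ D := insert_subset huD (singleton_subset_iff.2 hvD)
    have h2 : 2 ≤ #D := card_pair huv ▸ card_le_card hsub
    calc #(insert w (D \ {u, v})) ≤ #(D \ {u, v}) + 1 := card_insert_le _ _
      _ = #D - 2 + 1 := by rw [card_sdiff_of_subset hsub, card_pair huv]
      _ < #D := by omega
  · have hwD : w ∈ D := by
      obtain ⟨x, hxD, hxu⟩ := hD u huD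
      exact hu x hxu.symm ▸ hxD
    refine ⟨_, hD.insert_sdiff hHG (S := {v}) (w := w) (by simpa using hwv)
      (fun s hs y hy => absurd (mem_singleton.1 hs ▸ hy) (hv y)), ?_⟩
    rw [sdiff_singleton_eq_erase, insert_eq_of_mem (mem_erase.2 ⟨hwv.ne, hwD⟩)]
    exact card_erase_lt_of_mem hvD

end IsDominatingSet

section Bondage

variable [Fintype V] [DecidableEq V] (G : SimpleGraph V) [DecidableRel G.Adj]

theorem coe_incidenceFinset_union_subset_edgeSet (u v : V) :
    ↑(G.incidenceFinset u ∪ G.incidenceFinset v) ⊆ G.edgeSet := by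
  rw [coe_union, coe_incidenceFinset, coe_incidenceFinset]
  exact Set.union_subset (G.incidenceSet_subset u) (G.incidenceSet_subset v)

theorem card_incidenceFinset_union_of_adj {u v : V} (huv : G.Adj u v) :
    #(G.incidenceFinset u ∪ G.incidenceFinset v) = G.degree u + G.degree v - 1 := by
  have hinter : G.incidenceFinset u ∩ G.incidenceFinset v = {s(u, v)} := by
    rw [← coe_inj, coe_inter, coe_incidenceFinset, coe_incidenceFinset,
      G.incidenceSet_inter_incidenceSet_of_adj huv, coe_singleton]
  have := card_union_add_card_inter (G.incidenceFinset u) (G.incidenceFinset v)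
  rw [hinter, card_singleton, card_incidenceFinset_eq_degree,
    card_incidenceFinset_eq_degree] at this
  omega

theorem card_incidenceFinset_union_of_not_adj {u v : V} (huv : u ≠ v) (hadj : ¬G.Adj u v) :
    #(G.incidenceFinset u ∪ G.incidenceFinset v) = G.degree u + G.degree v := by
  rw [card_union_of_disjoint, card_incidenceFinset_eq_degree, card_incidenceFinset_eq_degree]
  rw [← disjoint_coe, coe_incidenceFinset, coe_incidenceFinset, Set.disjoint_iff_inter_eq_empty]
  exact G.incidenceSet_inter_incidenceSet_of_not_adj hadj huv

theorem bondageNumber_le_of_adj {u v : V} (huv : G.Adj u v) :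
    G.bondageNumber ≤ G.degree u + G.degree v - 1 := by
  set B := G.incidenceFinset u ∪ G.incidenceFinset v
  rw [← G.card_incidenceFinset_union_of_adj huv]
  refine G.bondageNumber_le_card (G.coe_incidenceFinset_union_subset_edgeSet u v)
    (G.dominationNumber_lt_of_forall_exists_card_lt fun D hD => ?_)
  have hisolated : ∀ x y, x = u ∨ x = v → ¬(G.deleteEdges ↑B).Adj x y := by
    intro x y hx hxy
    obtain ⟨hxy, hB⟩ := deleteEdges_adj.1 hxy
    have hxy' := (G.mem_incidenceFinset _ _).2 (G.mk'_mem_incidenceSet_left_iff.2 hxy)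
    rcases hx with rfl | rfl
    exacts [hB (mem_union_left _ hxy'), hB (mem_union_right _ hxy')]
  exact hD.exists_card_lt_of_adj (deleteEdges_le _) huv (hisolated u · (.inl rfl))
    (hisolated v · (.inr rfl))

theorem bondageNumber_le_of_adj_of_adj {u v w : V} (huv : u ≠ v) (hnadj : ¬G.Adj u v)
    (hwu : G.Adj w u) (hwv : G.Adj w v) :
    G.bondageNumber ≤ G.degree u + G.degree v - 1 := by
  set B := (G.incidenceFinset u ∪ G.incidenceFinset v).erase s(u, w)
  have huw : s(u, w) ∈ G.incidenceFinset u ∪ G.incidenceFinset v :=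
    mem_union_left _ ((G.mem_incidenceFinset _ _).2 (G.mk'_mem_incidenceSet_left_iff.2 hwu.symm))
  rw [← G.card_incidenceFinset_union_of_not_adj huv hnadj, ← card_erase_of_mem huw]
  refine G.bondageNumber_le_card
    ((coe_subset.2 (erase_subset _ _)).trans (G.coe_incidenceFinset_union_subset_edgeSet u v))
    (G.dominationNumber_lt_of_forall_exists_card_lt fun D hD => ?_)
  have hB : ∀ x y, G.Adj x y → x = u ∨ x = v → s(x, y) ≠ s(u, w) → s(x, y) ∈ B := by
    intro x y hxy hx hne
    have hxy' := (G.mem_incidenceFinset _ _).2 (G.mk'_mem_incidenceSet_left_iff.2 hxy)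
    rcases hx with rfl | rfl
    exacts [mem_erase.2 ⟨hne, mem_union_left _ hxy'⟩, mem_erase.2 ⟨hne, mem_union_right _ hxy'⟩]
  refine hD.exists_card_lt_of_adj_of_adj (deleteEdges_le _) huv hwu hwv (fun y hy => ?_)
    fun y hy => ?_
  · obtain ⟨huy, hyB⟩ := deleteEdges_adj.1 hy
    by_contra hyw
    exact hyB (hB u y huy (.inl rfl) fun h => hyw (Sym2.congr_right.1 h))
  · obtain ⟨hvy, hyB⟩ := deleteEdges_adj.1 hy
    refine hyB (hB v y hvy (.inr rfl) fun h => ?_)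
    rcases Sym2.eq_iff.1 h with ⟨rfl, -⟩ | ⟨rfl, -⟩
    exacts [huv rfl, hwv.ne rfl]

def closedNeighborFinset (v : V) : Finset V := insert v (G.neighborFinset v)

variable {G}

theorem mem_closedNeighborFinset {v w : V} :
    w ∈ G.closedNeighborFinset v ↔ w = v ∨ G.Adj v w := by
  rw [closedNeighborFinset, mem_insert, mem_neighborFinset]

variable (G)

theorem bondageNumber_le_of_not_disjoint {u v : V} (huv : u ≠ v)
    (h : ¬Disjoint (G.closedNeighborFinset u) (G.closedNeighborFinset v)) :
    G.bondageNumber ≤ G.degree u + G.degree v - 1 := by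
  by_cases hadj : G.Adj u v
  · exact G.bondageNumber_le_of_adj hadj
  obtain ⟨w, hwu, hwv⟩ := not_disjoint_iff.1 h
  rw [mem_closedNeighborFinset] at hwu hwv
  rcases hwu with rfl | hwu
  · rcases hwv with rfl | hwv
    exacts [absurd rfl huv, absurd hwv.symm hadj]
  rcases hwv with rfl | hwv
  · exact absurd hwu hadj
  exact G.bondageNumber_le_of_adj_of_adj huv hadj hwu.symm hwv.symm

theorem sum_closedNeighborFinset_degree_sub_pos {a : ℝ} {x : V} (hx : 0 < G.degree x)
    (hxa : (G.degree x : ℝ) ≤ a) (hnbr : ∀ y, G.Adj x y → 2 * a < G.degree x + G.degree y) :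
    0 < ∑ y ∈ G.closedNeighborFinset x, ((G.degree y : ℝ) - a) := by
  have hnbr_sum : ∑ _y ∈ G.neighborFinset x, (a - G.degree x) <
      ∑ y ∈ G.neighborFinset x, ((G.degree y : ℝ) - a) :=
    sum_lt_sum_of_nonempty (by rwa [← card_pos, card_neighborFinset_eq_degree]) fun y hy => by
      linarith [hnbr y ((G.mem_neighborFinset x y).1 hy)]
  rw [sum_const, nsmul_eq_mul, card_neighborFinset_eq_degree] at hnbr_sum
  rw [closedNeighborFinset, sum_insert (G.notMem_neighborFinset_self x)]
  have hx1 : (1 : ℝ) ≤ G.degree x := by exact_mod_cast hx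
  -- `(deg x - a) + deg x * (a - deg x) = (deg x - 1) * (a - deg x) ≥ 0`
  nlinarith

theorem exists_not_disjoint_degree_add_le [Nonempty V] (hdeg : ∀ x, 0 < G.degree x) {a : ℝ}
    (ha : ∑ x, (G.degree x : ℝ) ≤ Fintype.card V * a) :
    ∃ u v, u ≠ v ∧ ¬Disjoint (G.closedNeighborFinset u) (G.closedNeighborFinset v) ∧
      (G.degree u + G.degree v : ℝ) ≤ 2 * a := by
  by_contra! hcon
  set L := univ.filter fun x => (G.degree x : ℝ) ≤ a
  set T := L.biUnion G.closedNeighborFinset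
  have hdisj : (L : Set V).PairwiseDisjoint G.closedNeighborFinset := by
    intro x hx y hy hxy
    by_contra h
    linarith [hcon x y hxy h, (mem_filter.1 (mem_coe.1 hx)).2, (mem_filter.1 (mem_coe.1 hy)).2]
  have hL : ∀ x ∈ L, 0 < ∑ y ∈ G.closedNeighborFinset x, ((G.degree y : ℝ) - a) :=
    fun x hx => G.sum_closedNeighborFinset_degree_sub_pos (hdeg x) (mem_filter.1 hx).2
      fun y hxy => hcon x y hxy.ne (not_disjoint_iff.2
        ⟨x, mem_insert_self _ _, mem_closedNeighborFinset.2 (.inr hxy.symm)⟩)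
  have hT : ∀ y ∈ univ \ T, a < G.degree y := by
    intro y hy
    by_contra! hya
    exact (mem_sdiff.1 hy).2
      (mem_biUnion.2 ⟨y, mem_filter.2 ⟨mem_univ y, hya⟩, mem_insert_self _ _⟩)
  have hsplit : ∑ y, ((G.degree y : ℝ) - a) =
      ∑ x ∈ L, ∑ y ∈ G.closedNeighborFinset x, ((G.degree y : ℝ) - a) +
        ∑ y ∈ univ \ T, ((G.degree y : ℝ) - a) := by
    rw [← sum_biUnion hdisj, add_comm, sum_sdiff (subset_univ T)]
  have hpos : 0 < ∑ y, ((G.degree y : ℝ) - a) := by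
    rw [hsplit]
    rcases L.eq_empty_or_nonempty with hLe | hLne
    · have hTe : T = ∅ := by simp [T, hLe]
      rw [hLe, sum_empty, zero_add]
      exact sum_pos (fun y hy => sub_pos.2 (hT y hy)) (by simp [hTe])
    · exact add_pos_of_pos_of_nonneg (sum_pos hL hLne)
        (sum_nonneg fun y hy => (sub_pos.2 (hT y hy)).le)
  rw [sum_sub_distrib, sum_const, card_univ, nsmul_eq_mul] at hpos
  linarith

end Bondage

end SimpleGraph

theorem stmt_17_general {V : Type*} [Fintype V] [DecidableEq V] (G : SimpleGraph V)
    [DecidableRel G.Adj] (hconn : G.Connected)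
    (h : ℕ) (hh : 2 ≤ h)
    (hm : G.edgeFinset.card ≤ 2 * (Fintype.card V + 2 * h - 2))
    (hn1 : 2 * (1 + Real.sqrt (2 * h)) ≤ (Fintype.card V : ℝ)) :
    (G.bondageNumber : ℝ) ≤ 7 + 8 * ((h : ℝ) - 1) / (1 + Real.sqrt (2 * h)) := by
  set t := Real.sqrt (2 * h)
  have ht : 0 ≤ t := Real.sqrt_nonneg _
  have : Nontrivial V := Fintype.one_lt_card_iff_nontrivial.1 <| by
    have : (1 : ℝ) < Fintype.card V := by linarith
    exact_mod_cast this
  set n : ℝ := (Fintype.card V : ℝ)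
  have hn : 0 < n := by linarith
  have hdeg (x : V) : 0 < G.degree x := hconn.preconnected.degree_pos_of_nontrivial x
  obtain ⟨u, v, huv, hclose, hsum⟩ := G.exists_not_disjoint_degree_add_le hdeg
    (a := 2 * #G.edgeFinset / n) (by
      rw [← Nat.cast_sum, G.sum_degrees_eq_twice_card_edges, mul_div_cancel₀ _ hn.ne']
      push_cast; rfl)
  have hb : (G.bondageNumber : ℝ) ≤ G.degree u + G.degree v - 1 := by
    have hb := Nat.cast_le (α := ℝ) |>.2 (G.bondageNumber_le_of_not_disjoint huv hclose)
    rwa [Nat.cast_sub (by have := hdeg u; omega), Nat.cast_add, Nat.cast_one] at hb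
  have hm' : (#G.edgeFinset : ℝ) ≤ 2 * (n + 2 * h - 2) := by
    have hcast : ((Fintype.card V + 2 * h - 2 : ℕ) : ℝ) = n + 2 * h - 2 := by
      rw [Nat.cast_sub (by omega)]; push_cast; rfl
    rw [← hcast]; exact_mod_cast hm
  have hh' : (2 : ℝ) ≤ h := by exact_mod_cast hh
  calc (G.bondageNumber : ℝ) ≤ 2 * (2 * #G.edgeFinset / n) - 1 := by linarith
    _ ≤ 2 * (2 * (2 * (n + 2 * h - 2)) / n) - 1 := by gcongr
    _ = 7 + 16 * (h - 1) / n := by field_simp; ring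
    _ ≤ 7 + 16 * (h - 1) / (2 * (1 + t)) := by gcongr; linarith
    _ = 7 + 8 * (h - 1) / (1 + t) := by field_simp; ring

theorem stmt_17 {V : Type*} [Fintype V] [DecidableEq V] (G : SimpleGraph V)
    [DecidableRel G.Adj] (hconn : G.Connected) (htf : G.CliqueFree 3)
    (h : ℕ) (hh : 2 ≤ h)
    (hm : G.edgeFinset.card ≤ 2 * (Fintype.card V + 2 * h - 2))
    (hn1 : 2 * (1 + Real.sqrt (2 * h)) ≤ (Fintype.card V : ℝ))
    (hn2 : Fintype.card V ≤ 16 * (h - 1)) :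
    (G.bondageNumber : ℝ) ≤ 7 + 8 * ((h : ℝ) - 1) / (1 + Real.sqrt (2 * h)) :=
  stmt_17_general G hconn h hh hm hn1
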